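/- arXiv:1707.08762 — 2 statements merged into one kernel-verified Lean document; each statement's English description precedes it below -/
import Mathlib

section
/- If the attack relation of a topological argumentation model is transitive, then the grounded extension LFP_τ is closed under (binary) intersections. -/
/-!
Let `G` be the grounded extension. Since `G` is conflict-free and defends its members,
transitivity forces every `f ∈ G` to attack each open set `u` disjoint from it: were it the
other way round, a defender `w ∈ G` attacking `u` would attack `f`.

Now let `t` attack `f₁ ∩ f₂`, so that `t ∩ f₁` and `t ∩ f₂` are disjoint and one of them,
say `t ∩ f₂`, attacks the other. As `t ∩ f₂` is disjoint from `f₁`, it is attacked by `f₁`,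
hence by transitivity `f₁` attacks `t ∩ f₁ ⊆ f₁`, so `t ∩ f₁ = ∅` and `f₁ ∈ G` attacks `t`.
Thus `G` defends `f₁ ∩ f₂`, which therefore lies in `G`.
-/

variable {X : Type*} [TopologicalSpace X]

/-- The set of opens defended by the family `T` of opens
(`atk t t'` reads "t' attacks t"). -/
def defends (atk : Set X → Set X → Prop) (T : Set (Set X)) : Set (Set X) :=
  {t | IsOpen t ∧ ∀ t', IsOpen t' → atk t t' → ∃ t'' ∈ T, atk t' t''}

/-- The grounded extension `LFP_τ`: the least fixed point of the defense
function, constructed as the intersection of all prefixed points. -/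
def groundedExt (atk : Set X → Set X → Prop) : Set (Set X) :=
  ⋂₀ {T : Set (Set X) | defends atk T ⊆ T}

/-- Grounded belief: some member of the grounded extension supports `P`. -/
def GroundedBelief (atk : Set X → Set X → Prop) (P : Set X) : Prop :=
  ∃ f ∈ groundedExt atk, f ⊆ P

/-- `groundedExt atk` is definitionally `(defendsHom atk).lfp`. -/
def defendsHom (atk : Set X → Set X → Prop) : Set (Set X) →o Set (Set X) where
  toFun := defends atk
  monotone' _ _ hTT' _ := fun ⟨ht, hdef⟩ =>
    ⟨ht, fun t' ht' hatk => (hdef t' ht' hatk).imp fun _ ⟨hmem, h⟩ => ⟨hTT' hmem, h⟩⟩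

section Grounded

variable {atk : Set X → Set X → Prop}

theorem defends_groundedExt : defends atk (groundedExt atk) = groundedExt atk :=
  (defendsHom atk).map_lfp

theorem mem_defends_of_mem_groundedExt {f : Set X} (hf : f ∈ groundedExt atk) :
    f ∈ defends atk (groundedExt atk) := by
  rwa [defends_groundedExt]

theorem isOpen_of_mem_groundedExt {f : Set X} (hf : f ∈ groundedExt atk) : IsOpen f :=
  (mem_defends_of_mem_groundedExt hf).1

theorem groundedExt_conflictFree {a b : Set X} (ha : a ∈ groundedExt atk)
    (hb : b ∈ groundedExt atk) : ¬ atk a b := by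
  let C := {t ∈ groundedExt atk | ∀ s ∈ groundedExt atk, ¬ atk t s}
  suffices hC : groundedExt atk ⊆ C from (hC ha).2 b hb
  refine (defendsHom atk).lfp_le fun u hu => ⟨?_, fun s hs hsu => ?_⟩
  · rw [← defends_groundedExt]
    exact (defendsHom atk).monotone (fun _ hw => hw.1) hu
  · -- `u`'s defender `w ∈ C` attacks `s`, and `s ∈ groundedExt` is defended against `w`
    obtain ⟨w, ⟨hw, hwC⟩, hws⟩ := hu.2 s (isOpen_of_mem_groundedExt hs) hsu
    obtain ⟨v, hv, hwv⟩ :=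
      (mem_defends_of_mem_groundedExt hs).2 w (isOpen_of_mem_groundedExt hw) hws
    exact hwC v hv hwv

theorem attacks_of_inter_eq_empty_of_mem_groundedExt
    (h1 : ∀ t₁ t₂ : Set X, IsOpen t₁ → IsOpen t₂ → (t₁ ∩ t₂ = ∅ ↔ atk t₁ t₂ ∨ atk t₂ t₁))
    (htrans : ∀ t₁ t₂ t₃ : Set X, IsOpen t₁ → IsOpen t₂ → IsOpen t₃ →
      atk t₁ t₂ → atk t₂ t₃ → atk t₁ t₃)
    {f u : Set X} (hf : f ∈ groundedExt atk) (hu : IsOpen u) (hfu : u ∩ f = ∅) : atk u f := by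
  have hfo := isOpen_of_mem_groundedExt hf
  refine ((h1 u f hu hfo).mp hfu).resolve_right fun hfu => ?_
  obtain ⟨w, hw, huw⟩ := (mem_defends_of_mem_groundedExt hf).2 u hu hfu
  exact groundedExt_conflictFree hf hw <|
    htrans f u w hfo hu (isOpen_of_mem_groundedExt hw) hfu huw

theorem attacks_of_attacks_inter_of_mem_groundedExt
    (h1 : ∀ t₁ t₂ : Set X, IsOpen t₁ → IsOpen t₂ → (t₁ ∩ t₂ = ∅ ↔ atk t₁ t₂ ∨ atk t₂ t₁))
    (htrans : ∀ t₁ t₂ t₃ : Set X, IsOpen t₁ → IsOpen t₂ → IsOpen t₃ →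
      atk t₁ t₂ → atk t₂ t₃ → atk t₁ t₃)
    {f g t : Set X} (hf : f ∈ groundedExt atk) (hg : g ∈ groundedExt atk) (ht : IsOpen t)
    (hfgt : (f ∩ g) ∩ t = ∅) (hatk : atk (t ∩ f) (t ∩ g)) : atk t f := by
  have hgtf : (t ∩ g) ∩ f = ∅ := by rw [← hfgt]; ext; simp only [Set.mem_inter_iff]; tauto
  have hfo := isOpen_of_mem_groundedExt hf
  have htf := ht.inter hfo
  have htg := ht.inter (isOpen_of_mem_groundedExt hg)
  have hgf : atk (t ∩ g) f :=
    attacks_of_inter_eq_empty_of_mem_groundedExt h1 htrans hf htg hgtf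
  have hself : (t ∩ f) ∩ f = ∅ :=
    (h1 _ _ htf hfo).mpr (.inl (htrans _ _ _ htf htg hfo hatk hgf))
  rw [Set.inter_assoc, Set.inter_self] at hself
  exact attacks_of_inter_eq_empty_of_mem_groundedExt h1 htrans hf ht hself

end Grounded

theorem groundedExt_inter_of_transitive_general (atk : Set X → Set X → Prop)
    (h1 : ∀ t₁ t₂ : Set X, IsOpen t₁ → IsOpen t₂ → (t₁ ∩ t₂ = ∅ ↔ atk t₁ t₂ ∨ atk t₂ t₁))
    (htrans : ∀ t₁ t₂ t₃ : Set X, IsOpen t₁ → IsOpen t₂ → IsOpen t₃ →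
      atk t₁ t₂ → atk t₂ t₃ → atk t₁ t₃) :
    ∀ f₁ f₂ : Set X, f₁ ∈ groundedExt atk → f₂ ∈ groundedExt atk →
      f₁ ∩ f₂ ∈ groundedExt atk := by
  intro f₁ f₂ hf₁ hf₂
  have ho₁ := isOpen_of_mem_groundedExt hf₁
  have ho₂ := isOpen_of_mem_groundedExt hf₂
  rw [← defends_groundedExt]
  refine ⟨ho₁.inter ho₂, fun t ht hatk => ?_⟩
  have hdisj : (f₁ ∩ f₂) ∩ t = ∅ := (h1 _ _ (ho₁.inter ho₂) ht).mpr (.inl hatk)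
  have h₁₂ : (t ∩ f₁) ∩ (t ∩ f₂) = ∅ := by
    rw [← hdisj]; ext; simp only [Set.mem_inter_iff]; tauto
  rcases (h1 _ _ (ht.inter ho₁) (ht.inter ho₂)).mp h₁₂ with h | h
  · exact ⟨f₁, hf₁, attacks_of_attacks_inter_of_mem_groundedExt h1 htrans hf₁ hf₂ ht hdisj h⟩
  · rw [Set.inter_comm f₁] at hdisj
    exact ⟨f₂, hf₂, attacks_of_attacks_inter_of_mem_groundedExt h1 htrans hf₂ hf₁ ht hdisj h⟩

/-- If the attack relation is transitive, the grounded extension is closed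
under binary intersections. -/
theorem groundedExt_inter_of_transitive (atk : Set X → Set X → Prop)
    (h1 : ∀ t₁ t₂ : Set X, IsOpen t₁ → IsOpen t₂ → (t₁ ∩ t₂ = ∅ ↔ atk t₁ t₂ ∨ atk t₂ t₁))
    (h2 : ∀ t t₁ t₁' : Set X, IsOpen t → IsOpen t₁ → IsOpen t₁' → atk t₁ t → t₁' ⊆ t₁ → atk t₁' t)
    (h3 : ∀ t : Set X, IsOpen t → t ≠ ∅ → atk ∅ t ∧ ¬ atk t ∅)
    (htrans : ∀ t₁ t₂ t₃ : Set X, IsOpen t₁ → IsOpen t₂ → IsOpen t₃ →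
      atk t₁ t₂ → atk t₂ t₃ → atk t₁ t₃) :
    ∀ f₁ f₂ : Set X, f₁ ∈ groundedExt atk → f₂ ∈ groundedExt atk →
      f₁ ∩ f₂ ∈ groundedExt atk :=
  groundedExt_inter_of_transitive_general atk h1 htrans
end

section
/- Grounded belief is not closed under conjunction: there exists a topological argumentation model (on the three-point set X = {1,2,3} with the discrete topology) whose grounded extension is {{1,2}, {2,3}, {1,2,3}}, so that B {1,2} and B {2,3} hold but B {2} fails. -/
variable {X : Type*} [TopologicalSpace X]

/-! In the model below every nonempty set attacks `∅`, and nonempty sets attack each other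
exactly when they are disjoint, except that `{2}` does not attack `{0, 1}` and `{0}` does not
attack `{1, 2}`. Then `{0, 1}`, `{1, 2}` and `univ` are unattacked, so they lie in the grounded
extension. Conversely they form a prefixed point of the defense function: each contains `1` and
meets `{0, 2}`, so none of them attacks `{1}` or `{0, 2}`, while every other set is attacked by
`{1}` or by `{0, 2}`. Hence the grounded extension consists of exactly these three sets; each
supports `{0, 1}` or `{1, 2}`, but none is contained in `{1}`. -/

open Set

section GroundedExtension

variable {atk : Set X → Set X → Prop}

theorem defends_mono : Monotone (defends atk) := fun _ _ hST _ ⟨ht, hdef⟩ =>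
  ⟨ht, fun t' ht' hatk => (hdef t' ht' hatk).imp fun _ ⟨hS, h⟩ => ⟨hST hS, h⟩⟩

theorem groundedExt_subset {T : Set (Set X)} (hT : defends atk T ⊆ T) :
    groundedExt atk ⊆ T :=
  sInter_subset_of_mem hT

theorem defends_empty_subset_groundedExt : defends atk ∅ ⊆ groundedExt atk :=
  subset_sInter fun _ hT => (defends_mono (empty_subset _)).trans hT

theorem groundedExt_eq_of_subset_defends_empty {E : Set (Set X)} (hE : E ⊆ defends atk ∅)
    (hdef : defends atk E ⊆ E) : groundedExt atk = E :=
  (groundedExt_subset hdef).antisymm (hE.trans defends_empty_subset_groundedExt)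

end GroundedExtension

theorem Fintype.forall_set_iff_forall_finset {α : Type*} [Fintype α] {p : Set α → Prop} :
    (∀ s, p s) ↔ ∀ s : Finset α, p s :=
  Fintype.finsetEquivSet.forall_congr_right.symm

namespace ThreePoint

/-- The paper's witnessing relation, with `attacks t t'` for `t ⤙ t'` and the points `0, 1, 2`
standing for `1, 2, 3`. -/
def attacks (t t' : Set (Fin 3)) : Prop :=
  t = ∅ ∨
    (t'.Nonempty ∧ Disjoint t t' ∧ ¬ (t = {0, 1} ∧ t' = {2}) ∧ ¬ (t = {1, 2} ∧ t' = {0}))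

def unattacked : Set (Set (Fin 3)) := {{0, 1}, {1, 2}, univ}

/-- On `Finset (Fin 3)` the finite claims about `attacks` below become decidable. -/
theorem attacks_coe (S T : Finset (Fin 3)) :
    attacks S T ↔ S = ∅ ∨ (T.Nonempty ∧ Disjoint S T ∧ ¬ (S = {0, 1} ∧ T = {2}) ∧
      ¬ (S = {1, 2} ∧ T = {0})) := by
  unfold attacks
  norm_cast

theorem inter_eq_empty_iff_attacks (t₁ t₂ : Set (Fin 3)) :
    t₁ ∩ t₂ = ∅ ↔ attacks t₁ t₂ ∨ attacks t₂ t₁ := by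
  revert t₁ t₂
  simp only [Fintype.forall_set_iff_forall_finset, attacks_coe, ← Finset.coe_inter,
    Finset.coe_eq_empty]
  decide

theorem attacks_of_subset {t t₁ t₁' : Set (Fin 3)} (h : attacks t₁ t)
    (hsub : t₁' ⊆ t₁) : attacks t₁' t := by
  revert t t₁ t₁'
  simp only [Fintype.forall_set_iff_forall_finset, attacks_coe, Finset.coe_subset]
  decide

theorem attacks_empty {t : Set (Fin 3)} (ht : t ≠ ∅) : attacks ∅ t ∧ ¬ attacks t ∅ :=
  ⟨Or.inl rfl, by rintro (h | ⟨h, -⟩) <;> simp_all⟩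

theorem not_attacks_of_not_disjoint {t t' : Set (Fin 3)} (ht : t.Nonempty)
    (h : ¬ Disjoint t t') : ¬ attacks t t' := by
  rintro (h' | ⟨-, h', -⟩)
  exacts [ht.ne_empty h', h h']

theorem not_attacks_of_mem_unattacked {t : Set (Fin 3)} (ht : t ∈ unattacked)
    (t' : Set (Fin 3)) : ¬ attacks t t' := by
  revert t'
  rcases ht with rfl | rfl | rfl <;>
  simp only [Fintype.forall_set_iff_forall_finset, ← Finset.coe_insert, ← Finset.coe_singleton,
    ← Finset.coe_univ, attacks_coe] <;>
  decide

theorem mem_of_mem_unattacked {t : Set (Fin 3)} (ht : t ∈ unattacked) :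
    1 ∈ t ∧ (0 ∈ t ∨ 2 ∈ t) := by
  rcases ht with rfl | rfl | rfl <;> simp

theorem not_attacks_one_and_zero_two_of_mem_unattacked {t : Set (Fin 3)} (ht : t ∈ unattacked) :
    ¬ attacks {1} t ∧ ¬ attacks {0, 2} t := by
  obtain ⟨h1, h02⟩ := mem_of_mem_unattacked ht
  refine ⟨not_attacks_of_not_disjoint (singleton_nonempty 1) (not_disjoint_iff.2 ⟨1, rfl, h1⟩),
    not_attacks_of_not_disjoint (insert_nonempty 0 {2}) (not_disjoint_iff.2 ?_)⟩
  rcases h02 with h | h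
  exacts [⟨0, by simp, h⟩, ⟨2, by simp, h⟩]

theorem attacks_one_or_zero_two_of_not_mem_unattacked {t : Set (Fin 3)} (ht : t ∉ unattacked) :
    attacks t {1} ∨ attacks t {0, 2} := by
  revert t
  simp only [unattacked, mem_insert_iff, mem_singleton_iff]
  simp only [Fintype.forall_set_iff_forall_finset, ← Finset.coe_insert, ← Finset.coe_singleton,
    ← Finset.coe_univ, attacks_coe, Finset.coe_inj]
  decide

variable [TopologicalSpace (Fin 3)] [DiscreteTopology (Fin 3)]

theorem unattacked_subset_defends_empty : unattacked ⊆ defends attacks ∅ :=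
  fun t ht => ⟨isOpen_discrete t, fun t' _ h => (not_attacks_of_mem_unattacked ht t' h).elim⟩

theorem defends_unattacked_subset : defends attacks unattacked ⊆ unattacked := by
  intro t ⟨_, hdef⟩
  by_contra ht
  obtain ⟨a, ha, hna⟩ : ∃ a, attacks t a ∧ ∀ e ∈ unattacked, ¬ attacks a e := by
    rcases attacks_one_or_zero_two_of_not_mem_unattacked ht with h | h
    exacts [⟨_, h, fun e he => (not_attacks_one_and_zero_two_of_mem_unattacked he).1⟩,
      ⟨_, h, fun e he => (not_attacks_one_and_zero_two_of_mem_unattacked he).2⟩]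
  obtain ⟨e, he, h⟩ := hdef a (isOpen_discrete a) ha
  exact hna e he h

theorem groundedExt_attacks : groundedExt attacks = unattacked :=
  groundedExt_eq_of_subset_defends_empty unattacked_subset_defends_empty
    defends_unattacked_subset

end ThreePoint

open ThreePoint

/-- Grounded belief is not closed under conjunction: a three-point
counterexample with the discrete topology. -/
theorem groundedBelief_not_closed_under_conjunction :
    letI : TopologicalSpace (Fin 3) := ⊥
    ∃ atk : Set (Fin 3) → Set (Fin 3) → Prop,
      (∀ t₁ t₂ : Set (Fin 3), IsOpen t₁ → IsOpen t₂ →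
        (t₁ ∩ t₂ = ∅ ↔ atk t₁ t₂ ∨ atk t₂ t₁)) ∧
      (∀ t t₁ t₁' : Set (Fin 3), IsOpen t → IsOpen t₁ → IsOpen t₁' →
        atk t₁ t → t₁' ⊆ t₁ → atk t₁' t) ∧
      (∀ t : Set (Fin 3), IsOpen t → t ≠ ∅ → atk ∅ t ∧ ¬ atk t ∅) ∧
      groundedExt atk =
        {({0, 1} : Set (Fin 3)), ({1, 2} : Set (Fin 3)), Set.univ} ∧
      GroundedBelief atk ({0, 1} : Set (Fin 3)) ∧
      GroundedBelief atk ({1, 2} : Set (Fin 3)) ∧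
      ¬ GroundedBelief atk ({1} : Set (Fin 3)) := by
  let _ : TopologicalSpace (Fin 3) := ⊥
  have : DiscreteTopology (Fin 3) := ⟨rfl⟩
  have hE : groundedExt attacks = unattacked := groundedExt_attacks
  refine ⟨attacks, fun t₁ t₂ _ _ => inter_eq_empty_iff_attacks t₁ t₂,
    fun _ _ _ _ _ _ h hsub => attacks_of_subset h hsub, fun _ _ => attacks_empty, hE,
    ⟨{0, 1}, hE ▸ Or.inl rfl, subset_rfl⟩, ⟨{1, 2}, hE ▸ Or.inr (Or.inl rfl), subset_rfl⟩,
    ?_⟩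
  rintro ⟨f, hf, hsub⟩
  rcases (mem_of_mem_unattacked (hE ▸ hf)).2 with h | h <;> simpa using hsub h
end
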